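/- Suppose y is a deterministic function of x (so H(y | x) = 0), r̃ is independent of y with x = f(y, r̃) for deterministic f, and the Markov chain (y, r̃) → x → h holds. Then I(h; x) − I(h; y) − I(h; r̃) ≤ I(x; y) − I(h; y). -/

import Mathlib

open Finset

/-- Pushforward of a mass function `p` on a finite sample space along `f`. -/
noncomputable def pmap {Ω B : Type*} [Fintype Ω] [DecidableEq B] (p : Ω → ℝ) (f : Ω → B) : B → ℝ :=
  fun b => ∑ ω, if f ω = b then p ω else 0

/-- Shannon entropy of a mass function on a finite alphabet (natural log). -/
noncomputable def ent {A : Type*} [Fintype A] (p : A → ℝ) : ℝ :=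
  ∑ a, -(p a * Real.log (p a))

/-- Mutual information `I(f ; g)` of two discrete random variables `f, g` on (Ω, p). -/
noncomputable def MI {Ω A B : Type*} [Fintype Ω] [Fintype A] [Fintype B]
    [DecidableEq A] [DecidableEq B] (p : Ω → ℝ) (f : Ω → A) (g : Ω → B) : ℝ :=
  ent (pmap p f) + ent (pmap p g) - ent (pmap p (fun ω => (f ω, g ω)))

/-- Conditional entropy `H(f | g)`. -/
noncomputable def condEnt {Ω A B : Type*} [Fintype Ω] [Fintype A] [Fintype B]
    [DecidableEq A] [DecidableEq B] (p : Ω → ℝ) (f : Ω → A) (g : Ω → B) : ℝ :=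
  ent (pmap p (fun ω => (f ω, g ω))) - ent (pmap p g)

/-- Conditional mutual information `I(f ; g | k) = H(g | k) - H(g | f, k)`. -/
noncomputable def condMI {Ω A B C : Type*} [Fintype Ω] [Fintype A] [Fintype B] [Fintype C]
    [DecidableEq A] [DecidableEq B] [DecidableEq C]
    (p : Ω → ℝ) (f : Ω → A) (g : Ω → B) (k : Ω → C) : ℝ :=
  condEnt p g k - condEnt p g (fun ω => (f ω, k ω))

/-- `p` is a probability mass function. -/
def IsPMF {Ω : Type*} [Fintype Ω] (p : Ω → ℝ) : Prop :=
  (∀ ω, 0 ≤ p ω) ∧ ∑ ω, p ω = 1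

/-- Conditional independence of `f` and `g` given `k` under `p`
(the Markov chain `f → k → g`). -/
def CondIndep {Ω A B C : Type*} [Fintype Ω] [DecidableEq A] [DecidableEq B] [DecidableEq C]
    (p : Ω → ℝ) (f : Ω → A) (g : Ω → B) (k : Ω → C) : Prop :=
  ∀ a b c, pmap p (fun ω => (f ω, g ω, k ω)) (a, b, c) * pmap p k c =
    pmap p (fun ω => (f ω, k ω)) (a, c) * pmap p (fun ω => (g ω, k ω)) (b, c)

/-- Independence of `f` and `g` under `p`. -/
def Indep {Ω A B : Type*} [Fintype Ω] [DecidableEq A] [DecidableEq B]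
    (p : Ω → ℝ) (f : Ω → A) (g : Ω → B) : Prop :=
  ∀ a b, pmap p (fun ω => (f ω, g ω)) (a, b) = pmap p f a * pmap p g b

set_option linter.unusedSectionVars false
section aux
variable {Ω A B C : Type*} [Fintype Ω] [Fintype A] [Fintype B] [Fintype C]
  [DecidableEq A] [DecidableEq B] [DecidableEq C]

theorem pmap_nonneg (p : Ω → ℝ) (hp : ∀ ω, 0 ≤ p ω) (F : Ω → A) (a : A) :
    0 ≤ pmap p F a := by
  apply Finset.sum_nonneg; intro ω _; split <;> simp [hp ω]

theorem sum_pmap (p : Ω → ℝ) (F : Ω → A) : ∑ a, pmap p F a = ∑ ω, p ω := by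
  unfold pmap
  rw [Finset.sum_comm]
  exact Finset.sum_congr rfl fun ω _ => by simp

theorem pmap_congr (p : Ω → ℝ) (F G : Ω → A) (h : ∀ ω, p ω ≠ 0 → F ω = G ω) :
    pmap p F = pmap p G := by
  funext a
  unfold pmap
  refine Finset.sum_congr rfl fun ω _ => ?_
  by_cases hω : p ω = 0
  · simp [hω]
  · rw [h ω hω]

theorem pmap_comp (p : Ω → ℝ) (F : Ω → A) (u : A → B) :
    pmap p (fun ω => u (F ω)) = pmap (pmap p F) u := by
  funext b
  unfold pmap
  have h1 : ∀ a : A, (if u a = b then (∑ ω, if F ω = a then p ω else 0) else 0)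
      = ∑ ω, if F ω = a then (if u a = b then p ω else 0) else 0 := fun a => by
    by_cases h : u a = b <;> simp [h]
  simp_rw [h1]
  rw [Finset.sum_comm]
  refine Finset.sum_congr rfl fun ω _ => ?_
  simp

theorem ent_pmap_inj (q : A → ℝ) (u : A → B) (hu : Function.Injective u) :
    ent (pmap q u) = ent q := by
  have hval : ∀ a, pmap q u (u a) = q a := by
    intro a
    unfold pmap
    rw [Finset.sum_eq_single a]
    · simp
    · intro ω _ hne
      have : u ω ≠ u a := fun h => hne (hu h)
      simp [this]
    · simp
  unfold ent
  rw [← Finset.sum_subset (Finset.subset_univ (Finset.univ.image u))]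
  · rw [Finset.sum_image (fun a _ b _ h => hu h)]
    simp_rw [hval]
  · intro b _ hb
    have : pmap q u b = 0 := by
      unfold pmap
      refine Finset.sum_eq_zero fun ω _ => ?_
      have : u ω ≠ b := fun h => hb (Finset.mem_image.2 ⟨ω, Finset.mem_univ _, h⟩)
      simp [this]
    simp [this]

theorem le_pmap (q : A → ℝ) (hq : ∀ a, 0 ≤ q a) (u : A → B) (a : A) :
    q a ≤ pmap q u (u a) := by
  unfold pmap
  have h := Finset.single_le_sum (f := fun ω => if u ω = u a then q ω else 0)
    (fun ω _ => by split <;> simp [hq ω]) (Finset.mem_univ a)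
  simpa using h

theorem pmap_sum_mul (q : A → ℝ) (u : A → B) (t : B → ℝ) :
    ∑ b, pmap q u b * t b = ∑ a, q a * t (u a) := by
  unfold pmap
  simp_rw [Finset.sum_mul, ite_mul, zero_mul]
  rw [Finset.sum_comm]
  refine Finset.sum_congr rfl fun ω _ => ?_
  simp

theorem ent_pmap_le (q : A → ℝ) (hq : ∀ a, 0 ≤ q a) (u : A → B) :
    ent (pmap q u) ≤ ent q := by
  unfold ent
  have h1 : ∑ b, -(pmap q u b * Real.log (pmap q u b))
      = ∑ a, q a * (-Real.log (pmap q u (u a))) := by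
    rw [← pmap_sum_mul q u (fun b => -Real.log (pmap q u b))]
    refine Finset.sum_congr rfl fun b _ => by ring
  rw [h1]
  refine Finset.sum_le_sum fun a _ => ?_
  by_cases h : q a = 0
  · simp [h]
  · have hpos : 0 < q a := lt_of_le_of_ne (hq a) (Ne.symm h)
    have hle := le_pmap q hq u a
    have hlog := Real.log_le_log hpos hle
    nlinarith

theorem ent_mul (Q : A → ℝ) (R : B → ℝ) (hQ : ∑ a, Q a = 1) (hR : ∑ b, R b = 1)
    (P : A × B → ℝ) (hP : ∀ a b, P (a, b) = Q a * R b) :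
    ent P = ent Q + ent R := by
  unfold ent
  rw [Fintype.sum_prod_type]
  have key : ∀ (a : A) (b : B), -(P (a, b) * Real.log (P (a, b)))
      = -(Q a * Real.log (Q a)) * R b + Q a * -(R b * Real.log (R b)) := by
    intro a b
    rw [hP]
    by_cases hQa : Q a = 0
    · simp [hQa]
    · by_cases hRb : R b = 0
      · simp [hRb]
      · rw [Real.log_mul hQa hRb]; ring
  simp_rw [key, Finset.sum_add_distrib, ← Finset.mul_sum, hR, mul_one, ← Finset.sum_mul, hQ,
    one_mul]

theorem ent_condIndep (p : Ω → ℝ) (hp : ∀ ω, 0 ≤ p ω)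
    (F : Ω → A) (G : Ω → B) (K : Ω → C)
    (h : CondIndep p F G K) :
    ent (pmap p (fun ω => (F ω, G ω, K ω))) + ent (pmap p K)
      = ent (pmap p (fun ω => (F ω, K ω))) + ent (pmap p (fun ω => (G ω, K ω))) := by
  set P := pmap p (fun ω => (F ω, G ω, K ω)) with hP
  set PK := pmap p K with hPK
  set PFK := pmap p (fun ω => (F ω, K ω)) with hPFK
  set PGK := pmap p (fun ω => (G ω, K ω)) with hPGK
  have hPnn : ∀ a b c, 0 ≤ P (a, b, c) := fun a b c => pmap_nonneg p hp _ _
  have m1 : ∀ a c, PFK (a, c) = ∑ b, P (a, b, c) := by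
    intro a c
    rw [hPFK, hP]
    unfold pmap
    rw [Finset.sum_comm]
    refine Finset.sum_congr rfl fun ω _ => ?_
    by_cases h1 : F ω = a
    · by_cases h2 : K ω = c
      · simp [h1, h2, Prod.ext_iff]
      · simp [h1, h2, Prod.ext_iff]
    · simp [h1, Prod.ext_iff]
  have m2 : ∀ b c, PGK (b, c) = ∑ a, P (a, b, c) := by
    intro b c
    rw [hPGK, hP]
    unfold pmap
    rw [Finset.sum_comm]
    refine Finset.sum_congr rfl fun ω _ => ?_
    by_cases h1 : G ω = b
    · by_cases h2 : K ω = c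
      · simp [h1, h2, Prod.ext_iff]
      · simp [h1, h2, Prod.ext_iff]
    · simp [h1, Prod.ext_iff]
  have mK : ∀ c, PK c = ∑ b, PGK (b, c) := by
    intro c
    rw [hPK, hPGK]
    unfold pmap
    rw [Finset.sum_comm]
    refine Finset.sum_congr rfl fun ω _ => ?_
    by_cases h1 : K ω = c <;> simp [h1, Prod.ext_iff]
  have m3 : ∀ c, PK c = ∑ a, ∑ b, P (a, b, c) := by
    intro c
    rw [mK]
    simp_rw [m2]
    exact Finset.sum_comm
  have key : ∀ a b c, -(P (a,b,c) * Real.log (P (a,b,c))) + -(P (a,b,c) * Real.log (PK c))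
      = -(P (a,b,c) * Real.log (PFK (a,c))) + -(P (a,b,c) * Real.log (PGK (b,c))) := by
    intro a b c
    by_cases h0 : P (a, b, c) = 0
    · simp [h0]
    · have hp0 : 0 < P (a, b, c) := lt_of_le_of_ne (hPnn a b c) (Ne.symm h0)
      have hfk : 0 < PFK (a, c) := by
        rw [m1]
        calc 0 < P (a, b, c) := hp0
        _ ≤ ∑ b', P (a, b', c) :=
          Finset.single_le_sum (fun b' _ => hPnn a b' c) (Finset.mem_univ b)
      have hgk : 0 < PGK (b, c) := by
        rw [m2]
        exact lt_of_lt_of_le hp0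
          (Finset.single_le_sum (fun a' _ => hPnn a' b c) (Finset.mem_univ a))
      have hk : 0 < PK c := by
        rw [m3]
        calc 0 < ∑ b', P (a, b', c) :=
            lt_of_lt_of_le hp0 (Finset.single_le_sum (fun b' _ => hPnn a b' c) (Finset.mem_univ b))
        _ ≤ ∑ a', ∑ b', P (a', b', c) :=
          Finset.single_le_sum (fun a' _ => Finset.sum_nonneg fun b' _ => hPnn a' b' c)
            (Finset.mem_univ a)
      have heq := h a b c
      have := congrArg Real.log heq
      rw [Real.log_mul h0 (ne_of_gt hk), Real.log_mul (ne_of_gt hfk) (ne_of_gt hgk)] at this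
      nlinarith [this]
  have eP : ent P = ∑ a, ∑ b, ∑ c, -(P (a,b,c) * Real.log (P (a,b,c))) := by
    unfold ent
    rw [Fintype.sum_prod_type]
    exact Finset.sum_congr rfl fun a _ => by rw [Fintype.sum_prod_type]
  have eK : ent PK = ∑ a, ∑ b, ∑ c, -(P (a,b,c) * Real.log (PK c)) := by
    unfold ent
    have : ∀ c, -(PK c * Real.log (PK c)) = ∑ a, ∑ b, -(P (a,b,c) * Real.log (PK c)) := by
      intro c
      rw [m3, Finset.sum_mul]
      simp_rw [Finset.sum_mul]
      rw [← Finset.sum_neg_distrib]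
      exact Finset.sum_congr rfl fun a _ => by rw [← Finset.sum_neg_distrib]
    simp_rw [this]
    rw [Finset.sum_comm]
    exact Finset.sum_congr rfl fun a _ => Finset.sum_comm
  have eFK : ent PFK = ∑ a, ∑ b, ∑ c, -(P (a,b,c) * Real.log (PFK (a,c))) := by
    unfold ent
    rw [Fintype.sum_prod_type]
    refine Finset.sum_congr rfl fun a _ => ?_
    have : ∀ c, -(PFK (a,c) * Real.log (PFK (a,c))) = ∑ b, -(P (a,b,c) * Real.log (PFK (a,c))) := by
      intro c
      rw [m1, Finset.sum_mul, Finset.sum_neg_distrib]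
    simp_rw [this]
    exact Finset.sum_comm
  have eGK : ent PGK = ∑ a, ∑ b, ∑ c, -(P (a,b,c) * Real.log (PGK (b,c))) := by
    unfold ent
    rw [Fintype.sum_prod_type]
    have : ∀ b c, -(PGK (b,c) * Real.log (PGK (b,c))) = ∑ a, -(P (a,b,c) * Real.log (PGK (b,c))) := by
      intro b c
      rw [m2, Finset.sum_mul, Finset.sum_neg_distrib]
    simp_rw [this]
    have h1 : ∀ b : B, ∑ c, ∑ a, -(P (a,b,c) * Real.log (PGK (b,c)))
        = ∑ a, ∑ c, -(P (a,b,c) * Real.log (PGK (b,c))) := fun b => Finset.sum_comm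
    simp_rw [h1]
    exact Finset.sum_comm
  rw [eP, eK, eFK, eGK]
  simp_rw [← Finset.sum_add_distrib]
  exact Finset.sum_congr rfl fun a _ => Finset.sum_congr rfl fun b _ =>
    Finset.sum_congr rfl fun c _ => key a b c

end aux

/-- Suppose `y = g(x)` deterministically, `r̃ ⟂ y`, `x = f(y, r̃)`, and the
Markov chain `(y, r̃) → x → h` holds. Then
`I(h; x) − I(h; y) − I(h; r̃) ≤ I(x; y) − I(h; y)`. -/
theorem stmt7 {Y R X H : Type*} [Fintype Y] [Fintype R] [Fintype X] [Fintype H]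
    [DecidableEq Y] [DecidableEq R] [DecidableEq X] [DecidableEq H]
    (p : Y × R × X × H → ℝ) (hp : IsPMF p) (f : Y × R → X) (g : X → Y)
    (hy : ∀ ω, p ω ≠ 0 → ω.1 = g ω.2.2.1)
    (hindep : Indep p (fun ω => ω.2.1) (fun ω => ω.1))
    (hx : ∀ ω, p ω ≠ 0 → ω.2.2.1 = f (ω.1, ω.2.1))
    (hmarkov : CondIndep p (fun ω => ω.2.2.2) (fun ω => (ω.1, ω.2.1)) (fun ω => ω.2.2.1)) :
    MI p (fun ω => ω.2.2.2) (fun ω => ω.2.2.1) -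
        MI p (fun ω => ω.2.2.2) (fun ω => ω.1) -
        MI p (fun ω => ω.2.2.2) (fun ω => ω.2.1) ≤
      MI p (fun ω => ω.2.2.1) (fun ω => ω.1) -
        MI p (fun ω => ω.2.2.2) (fun ω => ω.1) := by
  obtain ⟨hnn, hsum⟩ := hp
  have A1 : ent (pmap p (fun ω : Y × R × X × H => (ω.2.2.1, ω.1)))
      = ent (pmap p (fun ω : Y × R × X × H => ω.2.2.1)) := by
    have e1 : pmap p (fun ω : Y × R × X × H => (ω.2.2.1, ω.1))
        = pmap (pmap p (fun ω : Y × R × X × H => ω.2.2.1)) (fun x => (x, g x)) := by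
      rw [← pmap_comp]
      refine pmap_congr _ _ _ fun ω hω => ?_
      show (ω.2.2.1, ω.1) = (ω.2.2.1, g ω.2.2.1)
      rw [hy ω hω]
    rw [e1, ent_pmap_inj]
    intro a b hab
    exact congrArg Prod.fst hab
  have A2 : ent (pmap p (fun ω : Y × R × X × H => (ω.2.2.2, (ω.1, ω.2.1), ω.2.2.1)))
        + ent (pmap p (fun ω : Y × R × X × H => ω.2.2.1))
      = ent (pmap p (fun ω : Y × R × X × H => (ω.2.2.2, ω.2.2.1)))
        + ent (pmap p (fun ω : Y × R × X × H => ((ω.1, ω.2.1), ω.2.2.1))) :=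
    ent_condIndep p hnn _ _ _ hmarkov
  have A3 : ent (pmap p (fun ω : Y × R × X × H => (ω.2.2.2, (ω.1, ω.2.1), ω.2.2.1)))
      = ent (pmap p (fun ω : Y × R × X × H => (ω.2.2.2, (ω.1, ω.2.1)))) := by
    have e1 : pmap p (fun ω : Y × R × X × H => (ω.2.2.2, (ω.1, ω.2.1), ω.2.2.1))
        = pmap (pmap p (fun ω : Y × R × X × H => (ω.2.2.2, (ω.1, ω.2.1))))
          (fun q => (q.1, q.2, f q.2)) := by
      rw [← pmap_comp]
      refine pmap_congr _ _ _ fun ω hω => ?_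
      show (ω.2.2.2, (ω.1, ω.2.1), ω.2.2.1) = (ω.2.2.2, (ω.1, ω.2.1), f (ω.1, ω.2.1))
      rw [hx ω hω]
    rw [e1, ent_pmap_inj]
    intro a b hab
    simp only [Prod.ext_iff] at hab
    exact Prod.ext hab.1 (Prod.ext hab.2.1.1 hab.2.1.2)
  have A4 : ent (pmap p (fun ω : Y × R × X × H => ((ω.1, ω.2.1), ω.2.2.1)))
      = ent (pmap p (fun ω : Y × R × X × H => (ω.1, ω.2.1))) := by
    have e1 : pmap p (fun ω : Y × R × X × H => ((ω.1, ω.2.1), ω.2.2.1))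
        = pmap (pmap p (fun ω : Y × R × X × H => (ω.1, ω.2.1))) (fun q => (q, f q)) := by
      rw [← pmap_comp]
      refine pmap_congr _ _ _ fun ω hω => ?_
      show ((ω.1, ω.2.1), ω.2.2.1) = ((ω.1, ω.2.1), f (ω.1, ω.2.1))
      rw [hx ω hω]
    rw [e1, ent_pmap_inj]
    intro a b hab
    exact congrArg Prod.fst hab
  have A5 : ent (pmap p (fun ω : Y × R × X × H => (ω.1, ω.2.1)))
      = ent (pmap p (fun ω : Y × R × X × H => ω.1))
        + ent (pmap p (fun ω : Y × R × X × H => ω.2.1)) := by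
    have e1 : pmap p (fun ω : Y × R × X × H => (ω.1, ω.2.1))
        = pmap (pmap p (fun ω : Y × R × X × H => (ω.2.1, ω.1))) Prod.swap :=
      pmap_comp p (fun ω : Y × R × X × H => (ω.2.1, ω.1)) Prod.swap
    rw [e1, ent_pmap_inj _ _ Prod.swap_injective,
      ent_mul (pmap p (fun ω : Y × R × X × H => ω.2.1))
        (pmap p (fun ω : Y × R × X × H => ω.1))
        (by rw [sum_pmap]; exact hsum) (by rw [sum_pmap]; exact hsum)
        (pmap p (fun ω : Y × R × X × H => (ω.2.1, ω.1))) hindep]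
    ring
  have A6 : ent (pmap p (fun ω : Y × R × X × H => (ω.2.2.2, ω.2.1)))
      ≤ ent (pmap p (fun ω : Y × R × X × H => (ω.2.2.2, (ω.1, ω.2.1)))) := by
    have e1 : pmap p (fun ω : Y × R × X × H => (ω.2.2.2, ω.2.1))
        = pmap (pmap p (fun ω : Y × R × X × H => (ω.2.2.2, (ω.1, ω.2.1))))
          (fun q => (q.1, q.2.2)) :=
      pmap_comp p (fun ω : Y × R × X × H => (ω.2.2.2, (ω.1, ω.2.1)))
        (fun q => (q.1, q.2.2))
    rw [e1]
    exact ent_pmap_le _ (pmap_nonneg p hnn _) _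
  simp only [MI]
  linarith [A1, A2, A3, A4, A5, A6]
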